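/- Define g : ℂ × ℂ × ℂ → Matrix (Fin 3) (Fin 3) ℂ pointwise on Heisenberg coordinates by g(U(a,b,c)) := U(a, 2*b, 2*c). Then for all a, b, c, a', b', c' ∈ ℂ the following are equivalent: (i) there exist integers l, m, k with U(a',b',c') = U(2*π*Complex.I*l, 2*π*Complex.I*m, (2*π*Complex.I)^2 * k / 2) * U(a,b,c); (ii) there exist integers l, m, k with U(a', 2*b', 2*c') = U(2*π*Complex.I*l, 2*π*Complex.I*m, (2*π*Complex.I)^2 * k) * U(a, 2*b, 2*c), together with Complex.exp a' = Complex.exp a and Complex.exp b' = Complex.exp b. (This expresses that the map H̃_ℤ∖H_ℂ → H_ℤ∖H_ℂ induced by g, covering (l,m) ↦ (l, m²) on (ℂˣ)², is a pullback.) -/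

import Mathlib

/-- The 3×3 upper unipotent complex matrix `U(a,b,c) = !![1,a,c; 0,1,b; 0,0,1]`. -/
def U (a b c : ℂ) : Matrix (Fin 3) (Fin 3) ℂ := !![1, a, c; 0, 1, b; 0, 0, 1]

/-! Both conditions reduce to coordinate equations. Those of (i) imply those of (ii) with
`m ↦ 2m`; conversely the `c`-equation of (ii) halves to that of (i), and the only thing
(ii) loses is the parity of `m`, which `exp b' = exp b` restores. -/

open Complex

lemma U_mul (α β γ a b c : ℂ) :
    U α β γ * U a b c = U (α + a) (β + b) (γ + c + α * b) := by
  ext i j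
  fin_cases i <;> fin_cases j <;> simp [U, Matrix.mul_apply, Fin.sum_univ_three] <;> ring

lemma U_inj {a b c a' b' c' : ℂ} :
    U a b c = U a' b' c' ↔ a = a' ∧ b = b' ∧ c = c' := by
  refine ⟨fun h => ⟨?_, ?_, ?_⟩, by rintro ⟨rfl, rfl, rfl⟩; rfl⟩
  · simpa [U] using congrFun (congrFun h 0) 1
  · simpa [U] using congrFun (congrFun h 1) 2
  · simpa [U] using congrFun (congrFun h 0) 2

lemma exp_eq_exp_iff_exists_two_pi_I_mul_add {z w : ℂ} :
    exp w = exp z ↔ ∃ n : ℤ, w = 2 * Real.pi * I * n + z := by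
  rw [exp_eq_exp_iff_exists_int]
  exact exists_congr fun n => by constructor <;> intro h <;> linear_combination h

/-- The map `H̃_ℤ∖H_ℂ → H_ℤ∖H_ℂ` induced by `g(U(a,b,c)) = U(a,2b,2c)`, covering
`(l,m) ↦ (l,m²)` on `(ℂˣ)²`, is a pullback: two Heisenberg coordinates are
`H̃_ℤ`-equivalent iff their `g`-images are `H_ℤ`-equivalent and they have the same
image in `(ℂˣ)²`. -/
theorem heisenberg_double_cover_pullback (a b c a' b' c' : ℂ) :
    (∃ l m k : ℤ,
        U a' b' c' =
          U (2 * (Real.pi : ℂ) * Complex.I * l) (2 * (Real.pi : ℂ) * Complex.I * m)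
            ((2 * (Real.pi : ℂ) * Complex.I) ^ 2 * k / 2) * U a b c) ↔
    (∃ l m k : ℤ,
        U a' (2 * b') (2 * c') =
          U (2 * (Real.pi : ℂ) * Complex.I * l) (2 * (Real.pi : ℂ) * Complex.I * m)
            ((2 * (Real.pi : ℂ) * Complex.I) ^ 2 * k) * U a (2 * b) (2 * c) ∧
        Complex.exp a' = Complex.exp a ∧ Complex.exp b' = Complex.exp b) := by
  simp only [U_mul, U_inj]
  constructor
  · rintro ⟨l, m, k, ha, hb, hc⟩
    refine ⟨l, 2 * m, k, ⟨ha, ?_, ?_⟩, exp_eq_exp_iff_exists_two_pi_I_mul_add.2 ⟨l, ha⟩,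
      exp_eq_exp_iff_exists_two_pi_I_mul_add.2 ⟨m, hb⟩⟩
    · rw [hb]; push_cast; ring
    · rw [hc]; ring
  · rintro ⟨l, -, k, ⟨ha, -, hc⟩, -, heb⟩
    obtain ⟨m, hb⟩ := exp_eq_exp_iff_exists_two_pi_I_mul_add.1 heb
    exact ⟨l, m, k, ha, hb, by linear_combination hc / 2⟩
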